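/- If a homeomorphism f of a compact metric space has the shadowing property and for every ε>0 there is δ>0 such that d(x,y)<δ implies V^s_ε(x) ∩ V^u_ε(y) ≠ ∅, then f has the limit shadowing property: every sequence (x_k)_{k∈ℕ} with d(f(x_k),x_{k+1})→0 is limit-shadowed by some y∈X, i.e., d(f^k(y),x_k)→0 as k→∞. -/
import Mathlib


open Filter Metric Set Topology

variable {X : Type*} [MetricSpace X]

/-- `f^k x` for `k : ℤ`, where `f` is a homeomorphism. -/
def iterZ (f : X ≃ₜ X) (k : ℤ) (x : X) : X :=
  if 0 ≤ k then (⇑f)^[k.toNat] x else (⇑f.symm)^[(-k).toNat] x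

/-- The classical shadowing property. -/
def Shadowing (f : X ≃ₜ X) : Prop :=
  ∀ ε > (0:ℝ), ∃ δ > (0:ℝ), ∀ x : ℤ → X,
    (∀ k : ℤ, dist (f (x k)) (x (k+1)) < δ) →
    ∃ z : X, ∀ k : ℤ, dist (iterZ f k z) (x k) < ε

/-- The L-shadowing property. -/
def LShadowing (f : X ≃ₜ X) : Prop :=
  ∀ ε > (0:ℝ), ∃ δ > (0:ℝ), ∀ x : ℤ → X,
    (∀ k : ℤ, dist (f (x k)) (x (k+1)) ≤ δ) →
    Tendsto (fun k : ℤ => dist (f (x k)) (x (k+1))) cofinite (nhds 0) →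
    ∃ z : X, (∀ k : ℤ, dist (iterZ f k z) (x k) ≤ ε) ∧
      Tendsto (fun k : ℤ => dist (iterZ f k z) (x k)) cofinite (nhds 0)

/-- The stable set of `x`. -/
def stableSet (f : X ≃ₜ X) (x : X) : Set X :=
  {y | Tendsto (fun n : ℕ => dist ((⇑f)^[n] x) ((⇑f)^[n] y)) atTop (nhds 0)}

/-- The unstable set of `x`. -/
def unstableSet (f : X ≃ₜ X) (x : X) : Set X := stableSet f.symm x

/-- The local stable set of size `ε` of `x`. -/
def localStable (f : X ≃ₜ X) (ε : ℝ) (x : X) : Set X :=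
  {y | ∀ n : ℕ, dist ((⇑f)^[n] x) ((⇑f)^[n] y) ≤ ε}

/-- The local unstable set of size `ε` of `x`. -/
def localUnstable (f : X ≃ₜ X) (ε : ℝ) (x : X) : Set X := localStable f.symm ε x

/-- `V^s_ε(x) = W^s(x) ∩ W^s_ε(x)`. -/
def Vs (f : X ≃ₜ X) (ε : ℝ) (x : X) : Set X := stableSet f x ∩ localStable f ε x

/-- `V^u_ε(x) = W^u(x) ∩ W^u_ε(x)`. -/
def Vu (f : X ≃ₜ X) (ε : ℝ) (x : X) : Set X := unstableSet f x ∩ localUnstable f ε x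

/-- The limit shadowing property. -/
def LimitShadowing (f : X ≃ₜ X) : Prop :=
  ∀ x : ℕ → X, Tendsto (fun k : ℕ => dist (f (x k)) (x (k+1))) atTop (nhds 0) →
    ∃ y : X, Tendsto (fun k : ℕ => dist ((⇑f)^[k] y) (x k)) atTop (nhds 0)

/-- The two-sided limit shadowing property. -/
def TwoSidedLimitShadowing (f : X ≃ₜ X) : Prop :=
  ∀ x : ℤ → X, Tendsto (fun k : ℤ => dist (f (x k)) (x (k+1))) cofinite (nhds 0) →
    ∃ y : X, Tendsto (fun k : ℤ => dist (iterZ f k y) (x k)) cofinite (nhds 0)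

/-- A non-wandering point. -/
def NonWandering (f : X ≃ₜ X) (x : X) : Prop :=
  ∀ U : Set X, IsOpen U → x ∈ U → ∃ k : ℕ, 0 < k ∧ ((⇑f)^[k] '' U ∩ U).Nonempty

/-- The non-wandering set. -/
def omegaSet (f : X ≃ₜ X) : Set X := {x | NonWandering f x}

/-- Topologically mixing. -/
def TopMixing (f : X ≃ₜ X) : Prop :=
  ∀ U V : Set X, IsOpen U → IsOpen V → U.Nonempty → V.Nonempty →
    ∃ n : ℕ, 0 < n ∧ ∀ k ≥ n, ((⇑f)^[k] '' U ∩ V).Nonempty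

/-- `f` is expansive on the set `A` (as a subsystem). -/
def ExpansiveOn (f : X ≃ₜ X) (A : Set X) : Prop :=
  ∃ c > (0:ℝ), ∀ x ∈ A, ∀ y ∈ A,
    (∀ k : ℤ, dist (iterZ f k x) (iterZ f k y) ≤ c) → x = y

/-- The dynamical ball `Γ_δ(x)`. -/
def dynBall (f : X ≃ₜ X) (δ : ℝ) (x : X) : Set X :=
  {y | ∀ k : ℤ, dist (iterZ f k x) (iterZ f k y) ≤ δ}

/-- There is a periodic `ε`-pseudo-orbit containing both `x` and `y`. -/
def ChainRel (f : X ≃ₜ X) (ε : ℝ) (x y : X) : Prop :=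
  ∃ (n : ℕ) (z : ℕ → X), 0 < n ∧ z 0 = x ∧ z n = x ∧ (∃ i ≤ n, z i = y) ∧
    ∀ i < n, dist (f (z i)) (z (i+1)) < ε

/-- The chain recurrent class of `x`. -/
def chainClass (f : X ≃ₜ X) (x : X) : Set X := {y | ∀ ε > (0:ℝ), ChainRel f ε x y}

/-- `h` is a semiconjugacy from `g` on `K` to the full shift on two symbols. -/
def SemiConjShift (g : X → X) (K : Set X) (h : X → (ℤ → Bool)) : Prop :=
  ContinuousOn h K ∧ (∀ s : ℤ → Bool, ∃ p ∈ K, h p = s) ∧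
    ∀ p ∈ K, h (g p) = fun i => h p (i + 1)

/-- `f` admits arbitrarily small topological semi-horseshoes inside `C`. -/
def SmallHorseshoes (f : X ≃ₜ X) (C : Set X) : Prop :=
  ∀ ε > (0:ℝ), ∃ N : ℕ, 1 ≤ N ∧ ∃ K : Set X, K ⊆ C ∧ IsCompact K ∧
    (⇑f)^[N] '' K = K ∧ (∀ k : ℤ, Metric.diam (iterZ f k '' K) ≤ ε) ∧
    ∃ h : X → (ℤ → Bool), SemiConjShift ((⇑f)^[N]) K h


lemma coe_pow_toEquiv (f : X ≃ₜ X) (n : ℕ) : ⇑(f.toEquiv ^ n) = (⇑f)^[n] := by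
  rw [Equiv.Perm.coe_pow]; rfl

lemma coe_pow_toEquiv_neg (f : X ≃ₜ X) (n : ℕ) : ⇑(f.toEquiv ^ (-(n:ℤ))) = (⇑f.symm)^[n] := by
  rw [zpow_neg, zpow_natCast, ← inv_pow, Equiv.Perm.coe_pow]; rfl

lemma iterZ_eq_zpow (f : X ≃ₜ X) (k : ℤ) (x : X) : iterZ f k x = (f.toEquiv ^ k) x := by
  unfold iterZ
  split_ifs with h
  · conv_rhs => rw [show k = (k.toNat : ℤ) by omega, zpow_natCast, coe_pow_toEquiv]
  · conv_rhs => rw [show k = (-((-k).toNat : ℤ)) by omega, coe_pow_toEquiv_neg]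

lemma iterZ_natCast (f : X ≃ₜ X) (n : ℕ) (x : X) : iterZ f (n : ℤ) x = (⇑f)^[n] x := by
  rw [iterZ_eq_zpow, zpow_natCast, coe_pow_toEquiv]

lemma iterZ_succ (f : X ≃ₜ X) (k : ℤ) (x : X) : iterZ f (k + 1) x = f (iterZ f k x) := by
  simp only [iterZ_eq_zpow, add_comm k 1, zpow_add, zpow_one]
  rfl

lemma symm_iter_cancel (f : X ≃ₜ X) (m : ℕ) (w : X) :
    (⇑f.symm)^[m] ((⇑f)^[m] w) = w :=
  (Function.LeftInverse.iterate f.symm_apply_apply m) w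

lemma iter_symm_cancel (f : X ≃ₜ X) (m : ℕ) (w : X) :
    (⇑f)^[m] ((⇑f.symm)^[m] w) = w :=
  (Function.LeftInverse.iterate f.apply_symm_apply m) w

/-- one-sided tail shadowing from two-sided shadowing -/
lemma tail_shadow (f : X ≃ₜ X) (hsh : Shadowing f) {ε : ℝ} (hε : 0 < ε) :
    ∃ δ > (0:ℝ), ∀ x : ℕ → X, (∀ k : ℕ, dist (f (x k)) (x (k+1)) < δ) →
      ∃ w : X, ∀ n : ℕ, dist ((⇑f)^[n] w) (x n) < ε := by
  obtain ⟨δ, hδ, hsd⟩ := hsh ε hε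
  refine ⟨δ, hδ, fun x hx => ?_⟩
  set z : ℤ → X := fun k => if 0 ≤ k then x k.toNat else iterZ f k (x 0) with hz
  have hps : ∀ k : ℤ, dist (f (z k)) (z (k+1)) < δ := by
    intro k
    rcases le_or_gt 0 k with h | h
    · have h1 : z k = x k.toNat := by simp only [hz]; rw [if_pos h]
      have h2 : z (k+1) = x (k.toNat + 1) := by
        have ht : (k+1).toNat = k.toNat + 1 := by omega
        simp only [hz]
        rw [if_pos (by omega : (0:ℤ) ≤ k + 1), ht]
      rw [h1, h2]; exact hx _
    · have h1 : z k = iterZ f k (x 0) := by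
        simp only [hz]; rw [if_neg (not_le.2 h)]
      have h2 : f (z k) = iterZ f (k+1) (x 0) := by rw [h1, ← iterZ_succ]
      rcases lt_or_ge (k+1) 0 with h3 | h3
      · have h4 : z (k+1) = iterZ f (k+1) (x 0) := by
          simp only [hz]; rw [if_neg (not_le.2 h3)]
        rw [h2, h4, dist_self]; exact hδ
      · have hk1 : k + 1 = 0 := by omega
        have h4 : z (k+1) = x 0 := by
          simp only [hz]; rw [if_pos h3]
          congr 1; omega
        rw [h2, h4, hk1]
        have h5 : iterZ f 0 (x 0) = x 0 := by
          have := iterZ_natCast f 0 (x 0); simpa using this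
        rw [h5, dist_self]; exact hδ
  obtain ⟨w, hw⟩ := hsd z hps
  refine ⟨w, fun n => ?_⟩
  have h6 := hw (n : ℤ)
  rw [iterZ_natCast] at h6
  have h7 : z (n : ℤ) = x n := by
    simp only [hz]; rw [if_pos (by omega : (0:ℤ) ≤ (n:ℤ))]
    simp
  rwa [h7] at h6

/-- dependent choice with a step relation -/
lemma dep_choice {σ : Type*} (P : ℕ → σ → Prop) (Q : ℕ → σ → σ → Prop)
    (base : ∃ s, P 0 s) (step : ∀ n s, P n s → ∃ t, P (n+1) t ∧ Q n s t) :
    ∃ S : ℕ → σ, (∀ n, P n (S n)) ∧ ∀ n, Q n (S n) (S (n+1)) := by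
  obtain ⟨s0, hs0⟩ := base
  let g : ∀ n : ℕ, {s : σ // P n s} := fun n =>
    Nat.rec ⟨s0, hs0⟩ (fun m ih => ⟨(step m ih.1 ih.2).choose, (step m ih.1 ih.2).choose_spec.1⟩) n
  exact ⟨fun n => (g n).1, fun n => (g n).2,
    fun n => (step n (g n).1 (g n).2).choose_spec.2⟩


/-- shadowing plus local product-like condition implies limit shadowing. -/
theorem limit_shadowing_of_shadowing [CompactSpace X] (f : X ≃ₜ X)
    (hsh : Shadowing f)
    (hV : ∀ ε > (0:ℝ), ∃ δ > (0:ℝ), ∀ x y : X,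
      dist x y < δ → (Vs f ε x ∩ Vu f ε y).Nonempty) :
    LimitShadowing f := by
  intro x hx
  -- scales
  set γ : ℕ → ℝ := fun n => (1/2 : ℝ)^n with hγdef
  have hγpos : ∀ n, 0 < γ n := fun n => by positivity
  have hγhalf : ∀ n, γ (n+1) = γ n / 2 := fun n => by
    simp [hγdef, pow_succ]; ring
  have hγanti : ∀ {n m}, n ≤ m → γ m ≤ γ n := fun {n m} h =>
    pow_le_pow_of_le_one (by norm_num) (by norm_num) h
  choose ρ hρpos hρ using fun n => hV (γ n) (hγpos n)
  set ε : ℕ → ℝ := fun n => min (γ n) (min (ρ n) (ρ (n-1))) / 4 with hεdef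
  have hεpos : ∀ n, 0 < ε n := fun n => by
    have hmin : 0 < min (γ n) (min (ρ n) (ρ (n-1))) :=
      lt_min (hγpos n) (lt_min (hρpos n) (hρpos _))
    simp only [hεdef]
    exact div_pos hmin (by norm_num)
  have hεγ : ∀ n, ε n ≤ γ n := fun n => by
    have := hγpos n
    calc ε n ≤ γ n / 4 := by apply div_le_div_of_nonneg_right ?_ (by norm_num); exact min_le_left _ _
    _ ≤ γ n := by linarith
  have hερ : ∀ n, ε n ≤ ρ n / 4 := fun n => by
    apply div_le_div_of_nonneg_right ?_ (by norm_num)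
    exact le_trans (min_le_right _ _) (min_le_left _ _)
  have hερ' : ∀ n, ε (n+1) ≤ ρ n / 4 := fun n => by
    have : ε (n+1) ≤ ρ ((n+1)-1) / 4 := by
      apply div_le_div_of_nonneg_right ?_ (by norm_num)
      exact le_trans (min_le_right _ _) (min_le_right _ _)
    simpa using this
  -- tail shadowing at each scale
  choose δ' hδ'pos Hsh using fun n => tail_shadow f hsh (hεpos n)
  -- tail of pseudo-orbit errors
  have hN : ∀ n : ℕ, ∃ N : ℕ, ∀ k ≥ N, dist (f (x k)) (x (k+1)) < δ' n := by
    intro n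
    have := hx.eventually (gt_mem_nhds (hδ'pos n))
    exact eventually_atTop.1 this
  choose N hNs using hN
  -- the invariant and transition
  set P : ℕ → ℕ × X → Prop := fun n s =>
    (∀ j : ℕ, dist ((⇑f)^[s.1 + j] s.2) (x (s.1 + j)) ≤ ε n + 2 * γ n) ∧
    (∀ θ > (0:ℝ), ∃ J : ℕ, ∀ j ≥ J, dist ((⇑f)^[s.1 + j] s.2) (x (s.1 + j)) < ε n + θ) with hPdef
  set Q : ℕ → ℕ × X → ℕ × X → Prop := fun n s t =>
    s.1 < t.1 ∧ ∀ k : ℕ, k ≤ t.1 → dist ((⇑f)^[k] t.2) ((⇑f)^[k] s.2) ≤ γ n with hQdef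
  have base : ∃ s, P 0 s := by
    obtain ⟨w, hw⟩ := Hsh 0 (fun j => x (N 0 + j))
      (fun k => by simpa [add_assoc] using hNs 0 (N 0 + k) (Nat.le_add_right _ _))
    refine ⟨(N 0, (⇑f.symm)^[N 0] w), ?_, ?_⟩
    · intro j
      have h1 : (⇑f)^[N 0 + j] ((⇑f.symm)^[N 0] w) = (⇑f)^[j] w := by
        rw [add_comm, Function.iterate_add_apply, iter_symm_cancel]
      rw [h1]
      have := hw j
      have h2 := hγpos 0
      linarith [le_of_lt this]
    · intro θ hθ
      refine ⟨0, fun j _ => ?_⟩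
      have h1 : (⇑f)^[N 0 + j] ((⇑f.symm)^[N 0] w) = (⇑f)^[j] w := by
        rw [add_comm, Function.iterate_add_apply, iter_symm_cancel]
      rw [h1]
      linarith [hw j]
  have step : ∀ n s, P n s → ∃ t, P (n+1) t ∧ Q n s t := by
    rintro n ⟨K, a⟩ ⟨h1, h2⟩
    obtain ⟨J, hJ⟩ := h2 (ε n) (hεpos n)
    set K' : ℕ := max (K + J + 1) (N (n+1)) with hK'def
    have hK'1 : K + J + 1 ≤ K' := hK'def ▸ le_max_left _ _
    have hK'2 : N (n+1) ≤ K' := hK'def ▸ le_max_right _ _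
    have hKK' : K < K' := by omega
    set p : X := (⇑f)^[K'] a with hpdef
    have hp : dist p (x K') < 2 * ε n := by
      have hj : K' - K ≥ J := by omega
      have := hJ (K' - K) hj
      have hKe : K + (K' - K) = K' := by omega
      rw [hKe] at this
      simpa [hpdef, two_mul] using this
    -- shadow the tail from K'
    obtain ⟨y', hy'⟩ := Hsh (n+1) (fun j => x (K' + j))
      (fun k => by simpa [add_assoc] using hNs (n+1) (K' + k) (le_trans hK'2 (Nat.le_add_right _ _)))
    have hy'0 : dist y' (x K') < ε (n+1) := by simpa using hy' 0
    have hdyp : dist y' p < ρ n := by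
      have h4 := hερ n; have h4' := hερ' n; have h5 := hρpos n
      have := dist_triangle y' (x K') p
      rw [dist_comm (x K') p] at this
      linarith
    obtain ⟨q, hqs, hqu⟩ := hρ n y' p hdyp
    obtain ⟨hq_st, hq_ls⟩ := hqs
    obtain ⟨hq_un, hq_lu⟩ := hqu
    refine ⟨(K', (⇑f.symm)^[K'] q), ⟨?_, ?_⟩, hKK', ?_⟩
    · intro j
      have hq1 : (⇑f)^[K' + j] ((⇑f.symm)^[K'] q) = (⇑f)^[j] q := by
        rw [add_comm, Function.iterate_add_apply, iter_symm_cancel]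
      rw [hq1]
      have t1 := hq_ls j
      have t2 := hy' j
      have := dist_triangle ((⇑f)^[j] q) ((⇑f)^[j] y') (x (K' + j))
      rw [dist_comm ((⇑f)^[j] q) ((⇑f)^[j] y')] at this
      have hγe : γ n = 2 * γ (n+1) := by rw [hγhalf]; ring
      have := hγpos (n+1)
      linarith
    · intro θ hθ
      have := hq_st.eventually (gt_mem_nhds hθ)
      obtain ⟨J₂, hJ₂⟩ := eventually_atTop.1 this
      refine ⟨J₂, fun j hj => ?_⟩
      have hq1 : (⇑f)^[K' + j] ((⇑f.symm)^[K'] q) = (⇑f)^[j] q := by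
        rw [add_comm, Function.iterate_add_apply, iter_symm_cancel]
      rw [hq1]
      have t1 := hJ₂ j hj
      have t2 := hy' j
      have := dist_triangle ((⇑f)^[j] q) ((⇑f)^[j] y') (x (K' + j))
      rw [dist_comm ((⇑f)^[j] q) ((⇑f)^[j] y')] at this
      linarith
    · intro k hk
      have hk' : k ≤ K' := hk
      have e1 : (⇑f)^[k] ((⇑f.symm)^[K'] q) = (⇑f.symm)^[K' - k] q := by
        have : (⇑f.symm)^[K'] q = (⇑f.symm)^[k] ((⇑f.symm)^[K' - k] q) := by
          rw [← Function.iterate_add_apply]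
          congr 1
          exact (Nat.add_sub_cancel' hk').symm
        rw [this, iter_symm_cancel]
      have e2 : (⇑f)^[k] a = (⇑f.symm)^[K' - k] p := by
        have : (⇑f.symm)^[K' - k] p = (⇑f.symm)^[K' - k] ((⇑f)^[K' - k] ((⇑f)^[k] a)) := by
          rw [hpdef, ← Function.iterate_add_apply, Nat.sub_add_cancel hk']
        rw [this, symm_iter_cancel]
      rw [e1, e2, dist_comm]
      exact hq_lu (K' - k)
  obtain ⟨S, hP, hQ⟩ := dep_choice P Q base step
  set K : ℕ → ℕ := fun n => (S n).1 with hKdef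
  set a : ℕ → X := fun n => (S n).2 with hadef
  have hKmono : StrictMono K := strictMono_nat_of_lt_succ (fun n => (hQ n).1)
  have hKge : ∀ n, n ≤ K n := fun n => hKmono.le_apply
  -- telescoping bound
  have tele : ∀ n m, n ≤ m → ∀ k ≤ K (n+1),
      dist ((⇑f)^[k] (a m)) ((⇑f)^[k] (a n)) ≤ 2 * γ n - 2 * γ m := by
    intro n m hnm
    induction m, hnm using Nat.le_induction with
    | base => intro k _; rw [dist_self]; linarith
    | succ m hnm ih =>
      intro k hk
      have h1 := (hQ m).2 k (le_trans hk (hKmono.le_iff_le.2 (by omega)))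
      have h2 := ih k hk
      have := dist_triangle ((⇑f)^[k] (a (m+1))) ((⇑f)^[k] (a m)) ((⇑f)^[k] (a n))
      have hh := hγhalf m
      linarith
  -- Cauchy
  have hcau : CauchySeq a := by
    apply cauchySeq_of_le_geometric (1/2 : ℝ) 1 (by norm_num)
    intro n
    have h0 := (hQ n).2 0 (Nat.zero_le _)
    simp only [Function.iterate_zero, id] at h0
    rw [one_mul, dist_comm]
    simpa [hγdef] using h0
  obtain ⟨y, hy⟩ := cauchySeq_tendsto_of_complete hcau
  -- limit bound
  have hlim : ∀ n, ∀ k ≤ K (n+1), dist ((⇑f)^[k] y) ((⇑f)^[k] (a n)) ≤ 2 * γ n := by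
    intro n k hk
    have hc : Tendsto (fun m => dist ((⇑f)^[k] (a m)) ((⇑f)^[k] (a n))) atTop
        (nhds (dist ((⇑f)^[k] y) ((⇑f)^[k] (a n)))) := by
      exact ((f.continuous.iterate k).tendsto y).comp hy |>.dist tendsto_const_nhds
    apply le_of_tendsto hc
    filter_upwards [eventually_ge_atTop n] with m hm
    have := tele n m hm k hk
    have := hγpos m
    linarith
  -- window bound
  have hwin : ∀ n k, K (n+1) ≤ k → k ≤ K (n+2) → dist ((⇑f)^[k] y) (x k) ≤ 3 * γ n := by
    intro n k hk1 hk2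
    have b1 : dist ((⇑f)^[k] y) ((⇑f)^[k] (a (n+1))) ≤ 2 * γ (n+1) := hlim (n+1) k hk2
    have b2 : dist ((⇑f)^[k] (a (n+1))) (x k) ≤ ε (n+1) + 2 * γ (n+1) := by
      have := (hP (n+1)).1 (k - K (n+1))
      have he : K (n+1) + (k - K (n+1)) = k := by omega
      rwa [he] at this
    have htr := dist_triangle ((⇑f)^[k] y) ((⇑f)^[k] (a (n+1))) (x k)
    have hh := hγhalf n
    have hb := hεγ (n+1)
    have hc := hγpos n
    linarith
  -- conclude
  refine ⟨y, ?_⟩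
  rw [Metric.tendsto_atTop]
  intro η hη
  obtain ⟨n, hn⟩ : ∃ n : ℕ, γ n < η / 3 := by
    obtain ⟨n, hn⟩ := exists_pow_lt_of_lt_one (by linarith : (0:ℝ) < η / 3)
      (by norm_num : (1/2 : ℝ) < 1)
    exact ⟨n, hn⟩
  refine ⟨K (n+1), fun k hk => ?_⟩
  -- find the window containing k
  set m : ℕ := Nat.findGreatest (fun l => K (l+1) ≤ k) k with hmdef
  have hnk : n ≤ k := le_trans (by linarith [hKge (n+1)] : n ≤ K (n+1)) hk
  have hmn : n ≤ m := Nat.le_findGreatest (P := fun l => K (l+1) ≤ k) hnk hk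
  have hm1 : K (m+1) ≤ k := Nat.findGreatest_spec (P := fun l => K (l+1) ≤ k) hnk hk
  have hm2 : k ≤ K (m+2) := by
    by_contra hcon
    push_neg at hcon
    have hm1k : m + 1 ≤ k := le_trans (by linarith [hKge (m+2)] : m + 1 ≤ K (m+2)) hcon.le
    have hng := Nat.findGreatest_is_greatest (P := fun l => K (l+1) ≤ k) (n := k)
      (Nat.lt_succ_self m) hm1k
    exact hng hcon.le
  have := hwin m k hm1 hm2
  have hγm : γ m ≤ γ n := hγanti hmn
  have hd : dist ((⇑f)^[k] y) (x k) < η := by linarith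
  simpa [Real.dist_eq, abs_of_nonneg dist_nonneg] using hd
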